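/- Let Q and Q̃ = Q + B be two charges where B ≠ 0 commutes with all F ∈ 𝓕, and let Ω be the vacuum with Q Ω = 0. Suppose B Ω ≠ 0. Then Q̃ Ω ≠ 0, yet for every F ∈ 𝓕, ⟨Ω, [Q̃, F] Ω⟩ = ⟨Ω, [Q, F] Ω⟩. Hence the condition 'Q̃ Ω ≠ 0' does not imply the SSB criterion: it is possible that Q̃ Ω ≠ 0 while ⟨Ω, [Q̃,F] Ω⟩ = 0 for all F whenever ⟨Ω, [Q,F] Ω⟩ = 0 for all F. -/
import Mathlib


/-- The action of a charge on the vacuum is not invariant under improvement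
transformations, while the SSB criterion is: if `B Ω ≠ 0` and `Q Ω = 0` then
`Q̃ Ω ≠ 0`, yet `⟨Ω,[Q̃,F]Ω⟩ = ⟨Ω,[Q,F]Ω⟩` for all fields, so `Q̃ Ω ≠ 0`
does not imply SSB. -/
theorem stmt15 (V : Type*) [AddCommGroup V] [Module ℂ V]
    (ip : V →ₗ⋆[ℂ] V →ₗ[ℂ] ℂ) (Ω : V)
    (𝓕 : Set (Module.End ℂ V)) (Q Qt B : Module.End ℂ V)
    (hB : B ≠ 0)
    (hcomm : ∀ F ∈ 𝓕, B * F = F * B)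
    (hQt : Qt = Q + B)
    (hQΩ : Q Ω = 0) (hBΩ : B Ω ≠ 0) :
    Qt Ω ≠ 0 ∧
    (∀ F ∈ 𝓕, ip Ω ((Qt * F - F * Qt) Ω) = ip Ω ((Q * F - F * Q) Ω)) ∧
    ((∀ F ∈ 𝓕, ip Ω ((Q * F - F * Q) Ω) = 0) →
      ∀ F ∈ 𝓕, ip Ω ((Qt * F - F * Qt) Ω) = 0) := by
  subst hQt
  have key : ∀ F ∈ 𝓕, ((Q + B) * F - F * (Q + B)) = (Q * F - F * Q) := by
    intro F hF
    have := hcomm F hF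
    rw [add_mul, mul_add] at *
    abel_nf
    rw [this]
    abel
  refine ⟨?_, ?_, ?_⟩
  · simp [LinearMap.add_apply, hQΩ, hBΩ]
  · intro F hF; rw [key F hF]
  · intro h F hF; rw [key F hF]; exact h F hF
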